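/- arXiv:1308.4698 — 2 statements merged into one kernel-verified Lean document; each statement's English description precedes it below -/
import Mathlib

section
/- Let Θ be the category of finite sets with injections and 𝒜 an abelian category. A functor F : Θ → 𝒜 is strongly polynomial of degree at most d if and only if the set {0, 1, …, d} (the sets of cardinality ≤ d) is a support of F. In particular, F is strongly polynomial if and only if F has finite support. -/
open CategoryTheory CategoryTheory.Limits
universe v u

/-- The category `Θ` of finite sets with injections, with skeletal objects `ℕ`
(the object `n` standing for `{1,…,n}`) and morphisms the injections. -/
def Theta : Type := ℕ

/-- The object of `Θ` corresponding to a natural number. -/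
def Theta.mk (n : ℕ) : Theta := n

/-- The cardinality of an object of `Θ`. -/
def Theta.card (n : Theta) : ℕ := n

instance : Category.{0} Theta where
  Hom m n := Fin m.card ↪ Fin n.card
  id _ := Function.Embedding.refl _
  comp f g := f.trans g

/-- The endofunctor `x ⊔ −` of `Θ` (disjoint union with a fixed finite set `x` on the
left). -/
def sh (x : ℕ) : Theta ⥤ Theta where
  obj n := Theta.mk (x + n.card)
  map {m n} f :=
    (finSumFinEquiv.symm.toEmbedding.trans
      ((Function.Embedding.refl (Fin x)).sumMap f)).trans finSumFinEquiv.toEmbedding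
  map_id := by
    intro n
    apply Function.Embedding.ext
    intro i
    show finSumFinEquiv (Sum.map _ _ (finSumFinEquiv.symm i)) = i
    conv_rhs => rw [← Equiv.apply_symm_apply finSumFinEquiv i]
    congr 1
    generalize finSumFinEquiv.symm i = s
    rcases s with j | j <;> rfl
  map_comp := by
    intro a b c f g
    apply Function.Embedding.ext
    intro i
    show finSumFinEquiv (Sum.map _ _ (finSumFinEquiv.symm i)) =
      finSumFinEquiv (Sum.map _ _
        (finSumFinEquiv.symm (finSumFinEquiv (Sum.map _ _ (finSumFinEquiv.symm i)))))
    rw [Equiv.symm_apply_apply]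
    congr 1
    generalize finSumFinEquiv.symm i = s
    rcases s with j | j <;> rfl

/-- A morphism of `Θ` seen as an embedding. -/
def homEmb {m n : Theta} (f : m ⟶ n) : Fin m.card ↪ Fin n.card := f

/-- The canonical injection `n → x ⊔ n` in `Θ`, induced by the unique map from the empty
set (initial object) to `x`. -/
def canIncl (x : ℕ) (n : Theta) : n ⟶ (sh x).obj n :=
  (Fin.natAddOrderEmb x).toEmbedding

lemma canIncl_natural (x : ℕ) {m n : Theta} (f : m ⟶ n) :
    canIncl x m ≫ (sh x).map f = f ≫ canIncl x n := by
  apply Function.Embedding.ext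
  intro i
  show finSumFinEquiv (Sum.map _ _ (finSumFinEquiv.symm (Fin.natAdd x i))) =
    Fin.natAdd x (homEmb f i)
  rw [finSumFinEquiv_symm_apply_natAdd]
  rfl

variable {𝒜 : Type u} [Category.{v} 𝒜]

/-- The natural transformation `i_x : F ⟶ τ_x F = F(x ⊔ −)` induced by the canonical
inclusions `n → x ⊔ n`. -/
def iNat (x : ℕ) (F : Theta ⥤ 𝒜) : F ⟶ sh x ⋙ F where
  app n := F.map (canIncl x n)
  naturality := by
    intro m n f
    dsimp
    rw [← F.map_comp, ← F.map_comp, canIncl_natural]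

/-- `δ_x F`, the cokernel of `i_x : F ⟶ τ_x F`. -/
noncomputable def del [Abelian 𝒜] (x : ℕ) (F : Theta ⥤ 𝒜) : Theta ⥤ 𝒜 :=
  cokernel (iNat x F)

/-- `F : Θ ⥤ 𝒜` is strongly polynomial of degree at most `d` if every `(d+1)`-fold
iterated `δ` of `F` vanishes. -/
noncomputable def StronglyPolynomialLE [Abelian 𝒜] (d : ℕ) (F : Theta ⥤ 𝒜) : Prop :=
  ∀ l : List ℕ, l.length = d + 1 → IsZero (l.foldr del F)

instance (m n : Theta) : Finite (m ⟶ n) :=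
  inferInstanceAs (Finite (Fin m.card ↪ Fin n.card))

/-- The functor `A[Θ(t,−)]`. -/
noncomputable def rep [Abelian 𝒜] (t : ℕ) (A : 𝒜) : Theta ⥤ 𝒜 where
  obj c := ∐ fun (_ : Theta.mk t ⟶ c) => A
  map {c d} f := Sigma.desc fun g => Sigma.ι (fun (_ : Theta.mk t ⟶ d) => A) (g ≫ f)

/-- A set `S` of objects is a *support* of `F` if every subfunctor of `F` agreeing with
`F` on all objects of `S` is all of `F`. -/
def IsSupport {C : Type*} [Category C] {𝒟 : Type*} [Category 𝒟]
    (S : Set C) (F : C ⥤ 𝒟) : Prop :=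
  ∀ (G : C ⥤ 𝒟) (i : G ⟶ F), Mono i → (∀ s ∈ S, IsIso (i.app s)) → IsIso i

/-!
Both conditions say that `F` is generated by its values on sets of cardinality at most `d`:
a morphism out of `F n` that kills the images of all `F f`, `f : m → n` with `|m| ≤ d`, is zero.

A support generates, because for `q : F n ⟶ Q` the kernels of `F n' ⟶ ∏_{u : n' → n} Q`,
`x ↦ (q (F u x))_u`, form a subfunctor of `F` which is all of `F` wherever `q` kills the images.

An injection `m → x ⊔ n` either factors through `n → x ⊔ n`, and then dies in `δ_x F`, or
factors through `x ⊔ l → x ⊔ n` with `|l| < |m|`. Hence `δ_x` lowers the generating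
cardinality by one, and `d + 1` applications of `δ` kill a functor generated in cardinality `≤ d`.
Conversely, writing a large `n` as `1 ⊔ n'`, a functor whose `δ_1` is generated in cardinality
`< k` is itself generated in cardinality `< k + 1`; so `δ_1^{d+1} F = 0` gives the converse.
-/

section Generation

variable {C : Type*} [Category C] {D : Type*} [Category D]

def IsGeneratedBy [HasZeroMorphisms D] (S : Set C) (F : C ⥤ D) : Prop :=
  ∀ ⦃n : C⦄ ⦃Q : D⦄ (q : F.obj n ⟶ Q), (∀ m ∈ S, ∀ f : m ⟶ n, F.map f ≫ q = 0) → q = 0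

variable {S T : Set C} {F : C ⥤ D}

lemma IsGeneratedBy.mono [HasZeroMorphisms D] (hST : S ⊆ T) (hS : IsGeneratedBy S F) :
    IsGeneratedBy T F :=
  fun _ _ q hq => hS q fun m hm => hq m (hST hm)

lemma isGeneratedBy_empty_iff [HasZeroMorphisms D] [HasZeroObject D] :
    IsGeneratedBy (∅ : Set C) F ↔ IsZero F := by
  rw [Functor.isZero_iff]
  exact ⟨fun h _ => (IsZero.iff_id_eq_zero _).mpr (h _ fun _ hm => hm.elim),
    fun h _ _ _ _ => (h _).eq_of_src _ _⟩

lemma IsGeneratedBy.isSupport [Abelian D] (h : IsGeneratedBy S F) : IsSupport S F := by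
  intro G i _ hS
  have (n : C) : Epi (i.app n) := by
    refine Abelian.epi_of_cokernel_π_eq_zero _ (h _ fun m hm f => ?_)
    have := hS m hm
    rw [← IsIso.inv_hom_id_assoc (i.app m) (F.map f), ← i.naturality, Category.assoc,
      Category.assoc, cokernel.condition, comp_zero, comp_zero]
  have (n : C) : IsIso (i.app n) := isIso_of_mono_of_epi _
  exact NatIso.isIso_of_isIso_app i

section KilledBy

variable [Abelian D] [∀ X Y : C, Finite (X ⟶ Y)] {n : C} {Q : D} (q : F.obj n ⟶ Q)

noncomputable def killedBy : C ⥤ D where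
  obj k := kernel (Pi.lift fun u : k ⟶ n => F.map u ≫ q)
  map {k _} v := kernel.lift _ (kernel.ι _ ≫ F.map v) <| Pi.hom_ext _ _ fun u => by
    simpa using kernel.condition_assoc (Pi.lift fun u : k ⟶ n => F.map u ≫ q) (Pi.π _ (v ≫ u))
  map_id _ := by ext; simp
  map_comp _ _ := by ext; simp

noncomputable def killedByι : killedBy q ⟶ F where
  app _ := kernel.ι _
  naturality _ _ _ := kernel.lift_ι _ _ _

end KilledBy

lemma IsSupport.isGeneratedBy [Abelian D] [∀ X Y : C, Finite (X ⟶ Y)] (h : IsSupport S F) :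
    IsGeneratedBy S F := by
  intro n Q q hq
  have (k : C) : Mono ((killedByι q).app k) := inferInstanceAs (Mono (kernel.ι _))
  have : IsIso (killedByι q) := by
    refine h _ _ (NatTrans.mono_of_mono_app _) fun s hs => kernel.ι_of_zero ?_
    exact Pi.hom_ext _ _ fun u => by simpa using hq s hs u
  have hzero : Pi.lift (fun u : n ⟶ n => F.map u ≫ q) = 0 := by
    rw [← cancel_epi ((killedByι q).app n), comp_zero]
    exact kernel.condition _
  simpa using congrArg (· ≫ Pi.π _ (𝟙 n)) hzero

end Generation

namespace Theta

lemma hom_ext {m n : Theta} {f g : m ⟶ n} (h : ∀ x, homEmb f x = homEmb g x) : f = g :=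
  Function.Embedding.ext h

lemma finite_setOf_card_le (d : ℕ) : {n : Theta | n.card ≤ d}.Finite :=
  Set.finite_Iic d

lemma exists_comp_eq_of_range_subset {l m n : Theta} {f : l ⟶ n} {e : m ⟶ n}
    (h : Set.range (homEmb f) ⊆ Set.range (homEmb e)) : ∃ g : l ⟶ m, g ≫ e = f := by
  obtain ⟨g, hg⟩ := Set.range_subset_range_iff_exists_comp.mp h
  exact ⟨⟨g, .of_comp (f := homEmb e) (hg ▸ (homEmb f).injective)⟩,
    hom_ext fun x => (congrFun hg x).symm⟩

lemma homEmb_sh_map_castAdd (a : ℕ) {m n : Theta} (g : m ⟶ n) (i : Fin a) :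
    homEmb ((sh a).map g) (Fin.castAdd m.card i) = Fin.castAdd n.card i := by
  show finSumFinEquiv (Sum.map id (homEmb g) (finSumFinEquiv.symm (Fin.castAdd m.card i))) = _
  rw [finSumFinEquiv_symm_apply_castAdd]
  rfl

lemma homEmb_sh_map_natAdd (a : ℕ) {m n : Theta} (g : m ⟶ n) (i : Fin m.card) :
    homEmb ((sh a).map g) (Fin.natAdd a i) = Fin.natAdd a (homEmb g i) := by
  show finSumFinEquiv (Sum.map id (homEmb g) (finSumFinEquiv.symm (Fin.natAdd a i))) = _
  rw [finSumFinEquiv_symm_apply_natAdd]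
  rfl

lemma exists_comp_canIncl_or_comp_sh_map {a : ℕ} {m n : Theta} (f : m ⟶ (sh a).obj n) :
    (∃ h : m ⟶ n, h ≫ canIncl a n = f) ∨
      ∃ (l : Theta) (g : l ⟶ n) (h : m ⟶ (sh a).obj l), l.card < m.card ∧ h ≫ (sh a).map g = f := by
  by_cases hf : Set.range (homEmb f) ⊆ Set.range (Fin.natAdd a)
  · exact .inl (exists_comp_eq_of_range_subset hf)
  obtain ⟨_, ⟨x₀, rfl⟩, hx₀⟩ := Set.not_subset.mp hf
  classical
  let R : Finset (Fin n.card) := {y | Fin.natAdd a y ∈ Set.range (homEmb f)}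
  let g : Theta.mk R.card ⟶ n := (R.orderEmbOfFin rfl).toEmbedding
  have hR : R.card < m.card := calc
    R.card ≤ ((Finset.univ.erase x₀).image (homEmb f)).card := by
      refine Finset.card_le_card_of_injOn (Fin.natAdd a) (fun y hy => ?_)
        (Fin.natAdd_injective _ _).injOn
      obtain ⟨x, hx⟩ := (Finset.mem_filter.mp hy).2
      refine Finset.mem_image.mpr ⟨x, Finset.mem_erase.mpr ⟨?_, Finset.mem_univ x⟩, hx⟩
      rintro rfl
      exact hx₀ ⟨y, hx.symm⟩
    _ ≤ (Finset.univ.erase x₀).card := Finset.card_image_le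
    _ < m.card := by
      simpa using Finset.card_erase_lt_of_mem (Finset.mem_univ x₀)
  have hrange : Set.range (homEmb f) ⊆ Set.range (homEmb ((sh a).map g)) := by
    rintro _ ⟨x, rfl⟩
    induction h : homEmb f x using Fin.addCases with
    | left i => exact ⟨Fin.castAdd _ i, homEmb_sh_map_castAdd a g i⟩
    | right y =>
      have hy : y ∈ Set.range (R.orderEmbOfFin rfl) := by
        rw [Finset.range_orderEmbOfFin]
        simpa [R] using ⟨x, h⟩
      obtain ⟨z, rfl⟩ := hy
      exact ⟨Fin.natAdd a z, homEmb_sh_map_natAdd a g z⟩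
  obtain ⟨h, hh⟩ := exists_comp_eq_of_range_subset hrange
  exact .inr ⟨_, g, h, hR, hh⟩

end Theta

lemma NatTrans.exists_cokernel_π_app_comp_eq {C : Type*} [Category C] {D : Type*} [Category D]
    [Abelian D] {F G : C ⥤ D} (α : F ⟶ G) {n : C} {Q : D} (q : G.obj n ⟶ Q)
    (hq : α.app n ≫ q = 0) : ∃ q', (cokernel.π α).app n ≫ q' = q :=
  ⟨_, (CokernelCofork.IsColimit.desc'
    (isColimitOfHasCokernelOfPreservesColimit ((evaluation C D).obj n) α) q hq).2⟩

section Delta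

variable [Abelian 𝒜]

noncomputable def delπ (a : ℕ) (F : Theta ⥤ 𝒜) : sh a ⋙ F ⟶ del a F :=
  cokernel.π (iNat a F)

instance (a : ℕ) (F : Theta ⥤ 𝒜) (n : Theta) : Epi ((delπ a F).app n) :=
  inferInstanceAs (Epi ((cokernel.π (iNat a F)).app n))

lemma map_canIncl_comp_delπ_app (a : ℕ) (F : Theta ⥤ 𝒜) (n : Theta) :
    F.map (canIncl a n) ≫ (delπ a F).app n = 0 := by
  change (iNat a F ≫ cokernel.π (iNat a F)).app n = 0
  rw [cokernel.condition, NatTrans.app_zero]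

lemma exists_delπ_app_comp_eq {a : ℕ} {F : Theta ⥤ 𝒜} {n : Theta} {Q : 𝒜}
    (q : F.obj ((sh a).obj n) ⟶ Q) (hq : F.map (canIncl a n) ≫ q = 0) :
    ∃ q' : (del a F).obj n ⟶ Q, (delπ a F).app n ≫ q' = q :=
  NatTrans.exists_cokernel_π_app_comp_eq (iNat a F) q hq

lemma isGeneratedBy_card_lt_of_forall_le {k : ℕ} {F : Theta ⥤ 𝒜}
    (h : ∀ n : Theta, k ≤ n.card → ∀ ⦃Q : 𝒜⦄ (q : F.obj n ⟶ Q),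
      (∀ m : Theta, m.card < n.card → ∀ f : m ⟶ n, F.map f ≫ q = 0) → q = 0) :
    IsGeneratedBy {n : Theta | n.card < k} F := by
  intro n
  induction hN : n.card using Nat.strong_induction_on generalizing n with
  | _ N ih =>
    intro Q q hq
    by_cases hn : n.card < k
    · simpa using hq n hn (𝟙 n)
    refine h n (not_lt.mp hn) q fun m hm f => ih _ (hN ▸ hm) rfl (F.map f ≫ q) fun l hl e => ?_
    rw [← Category.assoc, ← F.map_comp]
    exact hq l hl (e ≫ f)

lemma isGeneratedBy_card_lt_add_of_del {a k : ℕ} (ha : 0 < a) {F : Theta ⥤ 𝒜}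
    (h : IsGeneratedBy {n : Theta | n.card < k} (del a F)) :
    IsGeneratedBy {n : Theta | n.card < k + a} F := by
  refine isGeneratedBy_card_lt_of_forall_le fun n hn Q q hq => ?_
  obtain ⟨n, rfl⟩ : ∃ n' : Theta, (sh a).obj n' = n :=
    ⟨Theta.mk (n.card - a), show a + (n.card - a) = n.card by omega⟩
  change k + a ≤ a + n.card at hn
  obtain ⟨q', rfl⟩ := exists_delπ_app_comp_eq q (hq n (show n.card < a + n.card by omega) _)
  rw [h q' fun m hm f => ?_, comp_zero]
  rw [← cancel_epi ((delπ a F).app m), comp_zero, ← (delπ a F).naturality_assoc f]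
  exact hq _ (show a + m.card < a + n.card by simp only [Set.mem_ofPred_eq] at hm; omega) _

lemma isGeneratedBy_card_lt_of_isZero_foldr_replicate {F : Theta ⥤ 𝒜} (k : ℕ)
    (h : IsZero ((List.replicate k 1).foldr del F)) :
    IsGeneratedBy {n : Theta | n.card < k} F := by
  induction k generalizing F with
  | zero => exact (isGeneratedBy_empty_iff.mpr h).mono (Set.empty_subset _)
  | succ k ih =>
    rw [List.replicate_succ', List.foldr_append] at h
    exact isGeneratedBy_card_lt_add_of_del one_pos (ih h)

lemma isGeneratedBy_del {k : ℕ} {F : Theta ⥤ 𝒜}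
    (h : IsGeneratedBy {n : Theta | n.card < k + 1} F) (a : ℕ) :
    IsGeneratedBy {n : Theta | n.card < k} (del a F) := by
  intro n Q q hq
  rw [← cancel_epi ((delπ a F).app n), comp_zero]
  refine h _ fun m hm f => ?_
  rcases Theta.exists_comp_canIncl_or_comp_sh_map f with ⟨g, rfl⟩ | ⟨l, g, e, hl, rfl⟩
  · rw [F.map_comp, Category.assoc, reassoc_of% map_canIncl_comp_delπ_app, zero_comp, comp_zero]
  · simp only [Set.mem_ofPred_eq] at hm
    rw [F.map_comp, Category.assoc, ← Functor.comp_map, (delπ a F).naturality_assoc g,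
      hq l (show l.card < k by omega) g, comp_zero, comp_zero]

lemma isGeneratedBy_foldr_del {k : ℕ} {F : Theta ⥤ 𝒜} (l : List ℕ)
    (h : IsGeneratedBy {n : Theta | n.card < k + l.length} F) :
    IsGeneratedBy {n : Theta | n.card < k} (l.foldr del F) := by
  induction l generalizing k with
  | nil => exact h
  | cons a l ih =>
    rw [List.length_cons, ← add_assoc, add_right_comm] at h
    exact isGeneratedBy_del (ih h) a

lemma stronglyPolynomialLE_iff_isGeneratedBy {d : ℕ} {F : Theta ⥤ 𝒜} :
    StronglyPolynomialLE d F ↔ IsGeneratedBy {n : Theta | n.card ≤ d} F := by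
  simp only [← Nat.lt_succ_iff]
  refine ⟨fun h => isGeneratedBy_card_lt_of_isZero_foldr_replicate _ (h _ (by simp)),
    fun h l hl => ?_⟩
  have := isGeneratedBy_foldr_del (k := 0) l (by rwa [zero_add, hl])
  simp only [Nat.not_lt_zero, Set.ofPred_false] at this
  exact isGeneratedBy_empty_iff.mp this

end Delta

lemma isSupport_iff_isGeneratedBy {C : Type*} [Category C] [∀ X Y : C, Finite (X ⟶ Y)]
    {D : Type*} [Category D] [Abelian D] {S : Set C} {F : C ⥤ D} :
    IsSupport S F ↔ IsGeneratedBy S F :=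
  ⟨IsSupport.isGeneratedBy, IsGeneratedBy.isSupport⟩

/-- a functor `F : Θ ⥤ 𝒜` is strongly polynomial of degree at most `d` iff
the sets of cardinality at most `d` form a support of `F`; in particular `F` is strongly
polynomial (of some degree) iff it has finite support. -/
theorem theta_stronglyPolynomial_iff_support
    {𝒜 : Type u} [Category.{v} 𝒜] [Abelian 𝒜] (F : Theta ⥤ 𝒜) :
    (∀ d : ℕ, StronglyPolynomialLE d F ↔ IsSupport {n : Theta | n.card ≤ d} F) ∧
    ((∃ d : ℕ, StronglyPolynomialLE d F) ↔ ∃ S : Set Theta, S.Finite ∧ IsSupport S F) := by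
  have key (d : ℕ) : StronglyPolynomialLE d F ↔ IsSupport {n : Theta | n.card ≤ d} F :=
    stronglyPolynomialLE_iff_isGeneratedBy.trans isSupport_iff_isGeneratedBy.symm
  refine ⟨key, fun ⟨d, hd⟩ => ⟨_, Theta.finite_setOf_card_le d, (key d).mp hd⟩,
    fun ⟨S, hS, hF⟩ => ?_⟩
  obtain ⟨d, hd⟩ := (hS.image Theta.card).bddAbove
  exact ⟨d, (key d).mpr ((hF.isGeneratedBy.mono fun n hn => hd ⟨n, hn, rfl⟩).isSupport)⟩
end

section
/- Let ℳ be a small symmetric monoidal category whose unit 0 is an initial object, admitting a finite set T of objects such that every object of ℳ is a direct summand of a finite sum of elements of T, and let 𝒜 be an abelian category. Then every strongly polynomial functor F : ℳ → 𝒜 of degree at most d has as a support the finite set S_d = { a_1 + ⋯ + a_i : i ≤ d, a_j ∈ T } (with S_0 = {0}). In particular every strongly polynomial functor ℳ → 𝒜 has finite support. -/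
open CategoryTheory CategoryTheory.Limits CategoryTheory.MonoidalCategory
universe v u

variable {ℳ : Type v} [SmallCategory ℳ] [MonoidalCategory ℳ]
variable {𝒜 : Type u} [Category.{v} 𝒜]

/-- The canonical morphism `c → x ⊗ c` induced by the unique map `0 → x` from the
(initial) unit. -/
def unitIncl (hI : IsInitial (𝟙_ ℳ)) (x c : ℳ) : c ⟶ x ⊗ c :=
  (λ_ c).inv ≫ (hI.to x ▷ c)

/-- The natural transformation `i_x : F ⟶ τ_x F = F(x ⊗ −)`. -/
def iNatM (hI : IsInitial (𝟙_ ℳ)) (x : ℳ) (F : ℳ ⥤ 𝒜) : F ⟶ tensorLeft x ⋙ F where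
  app c := F.map (unitIncl hI x c)
  naturality := by
    intro c d f
    dsimp
    rw [← F.map_comp, ← F.map_comp]
    congr 1
    simp only [unitIncl, Category.assoc, ← whisker_exchange]
    rw [← leftUnitor_inv_naturality_assoc]

/-- `δ_x F`, the cokernel of `i_x : F ⟶ τ_x F`. -/
noncomputable def delM [Abelian 𝒜] (hI : IsInitial (𝟙_ ℳ)) (x : ℳ) (F : ℳ ⥤ 𝒜) :
    ℳ ⥤ 𝒜 :=
  cokernel (iNatM hI x F)

/-- `F` is strongly polynomial of degree at most `d` if every `(d+1)`-fold iterated `δ`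
of `F` vanishes. -/
noncomputable def StronglyPolynomialLEM [Abelian 𝒜] (hI : IsInitial (𝟙_ ℳ)) (d : ℕ)
    (F : ℳ ⥤ 𝒜) : Prop :=
  ∀ l : List ℳ, l.length = d + 1 → IsZero (l.foldr (delM hI) F)

/-- The monoidal sum of a finite list of objects. -/
def msum : List ℳ → ℳ := fun l => l.foldr (fun a b => a ⊗ b) (𝟙_ ℳ)

/-! Pass from subfunctors to quotients: `S` is a support of `F` iff every quotient `Q` of `F`
vanishing on `S` is zero. Quotients are carried along by `δ_x`, and if `Q` vanishes on `S_d` then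
`δ_x Q` vanishes on `S_{d-1}`, since `(δ_x Q)(s)` is a quotient of `Q(x + s)`. As `δ_x F` has degree
`≤ d - 1`, induction on `d` gives `δ_x Q = 0` for all `x ∈ T`. Together with `Q(0) = 0` this forces
`Q = 0`: each `Q(c) ⟶ Q(x + c)` is epi, so `Q` vanishes on sums of elements of `T` and on their
retracts. -/

section

variable {C : Type*} [Category C] {𝒟 : Type*} [Category 𝒟]

def IsQuotientSupport (S : Set C) (F : C ⥤ 𝒟) : Prop :=
  ∀ (Q : C ⥤ 𝒟) (p : F ⟶ Q), Epi p → (∀ s ∈ S, IsZero (Q.obj s)) → IsZero Q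

lemma isZero_cokernel_obj_of_isIso_app [Abelian 𝒟] {G F : C ⥤ 𝒟} (i : G ⟶ F) (c : C)
    [IsIso (i.app c)] : IsZero ((cokernel i).obj c) := by
  have hπ : (cokernel.π i).app c = 0 := by
    rw [← cancel_epi (i.app c), comp_zero, ← NatTrans.comp_app, cokernel.condition,
      NatTrans.app_zero]
  exact IsZero.of_epi_eq_zero _ hπ

lemma IsQuotientSupport.isSupport [Abelian 𝒟] {S : Set C} {F : C ⥤ 𝒟}
    (hF : IsQuotientSupport S F) : IsSupport S F := by
  intro G i _ hi
  have : Epi i := Preadditive.epi_of_isZero_cokernel i <|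
    hF _ (cokernel.π i) inferInstance fun s hs =>
      have := hi s hs
      isZero_cokernel_obj_of_isIso_app i s
  exact isIso_of_mono_of_epi i

end

section

def msumsUpTo (T : Set ℳ) (d : ℕ) : Set ℳ :=
  {y | ∃ l : List ℳ, (∀ a ∈ l, a ∈ T) ∧ l.length ≤ d ∧ y = msum l}

lemma unit_mem_msumsUpTo (T : Set ℳ) (d : ℕ) : 𝟙_ ℳ ∈ msumsUpTo T d :=
  ⟨[], by simp, by simp, rfl⟩

lemma tensor_mem_msumsUpTo_succ {T : Set ℳ} {d : ℕ} {x y : ℳ} (hx : x ∈ T)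
    (hy : y ∈ msumsUpTo T d) : x ⊗ y ∈ msumsUpTo T (d + 1) := by
  obtain ⟨l, hlT, hld, rfl⟩ := hy
  exact ⟨x :: l, by simpa [hx] using hlT, by simpa using hld, rfl⟩

lemma msumsUpTo_finite {T : Set ℳ} (hT : T.Finite) (d : ℕ) : (msumsUpTo T d).Finite := by
  have := hT.to_subtype
  refine ((List.finite_length_le T d).image fun l => msum (l.map (↑))).subset ?_
  rintro _ ⟨l, hlT, hld, rfl⟩
  lift l to List T using hlT
  exact ⟨l, by simpa using hld, rfl⟩

def IsRetractGenerating (T : Set ℳ) : Prop :=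
  ∀ x : ℳ, ∃ l : List ℳ, (∀ a ∈ l, a ∈ T) ∧ ∃ (i : x ⟶ msum l) (r : msum l ⟶ x), i ≫ r = 𝟙 x

variable [Abelian 𝒜] (hI : IsInitial (𝟙_ ℳ))

-- The ascription `(… :)` elaborates the term without its expected type: unifying the
-- `cokernel` hidden in `delM` against the expected type first makes instance search fail.
lemma isZero_delM_obj_of_isZero (x : ℳ) (H : ℳ ⥤ 𝒜) (c : ℳ) (h : IsZero (H.obj (x ⊗ c))) :
    IsZero ((delM hI x H).obj c) :=
  (h.of_epi ((cokernel.π (iNatM hI x H)).app c) :)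

noncomputable def delMap (x : ℳ) {F H : ℳ ⥤ 𝒜} (ψ : F ⟶ H) : delM hI x F ⟶ delM hI x H :=
  cokernel.map (iNatM hI x F) (iNatM hI x H) ψ (Functor.whiskerLeft (tensorLeft x) ψ)
    (by ext c; exact ψ.naturality (unitIncl hI x c))

instance epi_delMap (x : ℳ) {F H : ℳ ⥤ 𝒜} (ψ : F ⟶ H) [Epi ψ] : Epi (delMap hI x ψ) := by
  have hψ : Epi (Functor.whiskerLeft (tensorLeft x) ψ) :=
    (NatTrans.epi_iff_epi_app _).2 fun c => inferInstanceAs (Epi (ψ.app (x ⊗ c)))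
  have hfac : cokernel.π (iNatM hI x F) ≫ delMap hI x ψ =
      Functor.whiskerLeft (tensorLeft x) ψ ≫ cokernel.π (iNatM hI x H) :=
    cokernel.π_desc _ _ _
  have : Epi (cokernel.π (iNatM hI x F) ≫ delMap hI x ψ) :=
    hfac ▸ epi_comp' hψ coequalizer.π_epi
  exact epi_of_epi (cokernel.π (iNatM hI x F)) (delMap hI x ψ)

lemma StronglyPolynomialLEM.delM {d : ℕ} {F : ℳ ⥤ 𝒜} (hF : StronglyPolynomialLEM hI (d + 1) F)
    (x : ℳ) : StronglyPolynomialLEM hI d (delM hI x F) := fun l hl => by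
  simpa [List.foldr_append] using hF (l ++ [x]) (by simp [hl])

lemma isZero_of_isZero_delM {T : Set ℳ} (hT : IsRetractGenerating T) (H : ℳ ⥤ 𝒜)
    (h0 : IsZero (H.obj (𝟙_ ℳ))) (hδ : ∀ x ∈ T, IsZero (delM hI x H)) : IsZero H := by
  have hsum : ∀ l : List ℳ, (∀ a ∈ l, a ∈ T) → IsZero (H.obj (msum l)) := by
    intro l
    induction l with
    | nil => exact fun _ => h0
    | cons a l ih =>
      intro hl
      have : Epi (iNatM hI a H) := Preadditive.epi_of_isZero_cokernel _ (hδ a (hl a (by simp)))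
      exact ((ih fun b hb => hl b (by simp [hb])).of_epi ((iNatM hI a H).app (msum l)) :)
  refine Functor.isZero _ fun y => ?_
  obtain ⟨l, hlT, i, r, hir⟩ := hT y
  exact IsZero.of_epi ((Retract.mk i r hir).map H).r (hsum l hlT)

theorem isQuotientSupport_msumsUpTo {T : Set ℳ} (hT : IsRetractGenerating T) :
    ∀ (d : ℕ) (F : ℳ ⥤ 𝒜), StronglyPolynomialLEM hI d F → IsQuotientSupport (msumsUpTo T d) F
  | d, F, hF, Q, p, _, hQ =>
    isZero_of_isZero_delM hI hT Q (hQ _ (unit_mem_msumsUpTo T d)) fun x hx => by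
      cases d with
      | zero => exact IsZero.of_epi (delMap hI x p) (hF [x] rfl)
      | succ d =>
        exact isQuotientSupport_msumsUpTo hT d _ (hF.delM hI x) _ (delMap hI x p) inferInstance
          fun s hs => isZero_delM_obj_of_isZero hI x Q s (hQ _ (tensor_mem_msumsUpTo_succ hx hs))

end

theorem stronglyPolynomial_support_general
    {ℳ : Type v} [SmallCategory ℳ] [MonoidalCategory ℳ]
    (hI : IsInitial (𝟙_ ℳ)) {𝒜 : Type u} [Category.{v} 𝒜] [Abelian 𝒜]
    (T : Set ℳ) (hTfin : T.Finite)
    (hgen : ∀ x : ℳ, ∃ l : List ℳ, (∀ a ∈ l, a ∈ T) ∧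
      ∃ (i : x ⟶ msum l) (r : msum l ⟶ x), i ≫ r = 𝟙 x)
    (d : ℕ) (F : ℳ ⥤ 𝒜) (hF : StronglyPolynomialLEM hI d F) :
    IsSupport {y : ℳ | ∃ l : List ℳ, (∀ a ∈ l, a ∈ T) ∧ l.length ≤ d ∧ y = msum l} F ∧
    Set.Finite {y : ℳ | ∃ l : List ℳ, (∀ a ∈ l, a ∈ T) ∧ l.length ≤ d ∧ y = msum l} :=
  ⟨(isQuotientSupport_msumsUpTo hI hgen d F hF).isSupport, msumsUpTo_finite hTfin d⟩

/-- over a small symmetric monoidal category `ℳ` with initial unit and a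
finite weak monoidal generating set `T`, every strongly polynomial functor of degree at
most `d` has the finite set `S_d` of sums of at most `d` elements of `T` as a support. -/
theorem stronglyPolynomial_support
    {ℳ : Type v} [SmallCategory ℳ] [MonoidalCategory ℳ] [SymmetricCategory ℳ]
    (hI : IsInitial (𝟙_ ℳ)) {𝒜 : Type u} [Category.{v} 𝒜] [Abelian 𝒜]
    (T : Set ℳ) (hTfin : T.Finite)
    (hgen : ∀ x : ℳ, ∃ l : List ℳ, (∀ a ∈ l, a ∈ T) ∧
      ∃ (i : x ⟶ msum l) (r : msum l ⟶ x), i ≫ r = 𝟙 x)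
    (d : ℕ) (F : ℳ ⥤ 𝒜) (hF : StronglyPolynomialLEM hI d F) :
    IsSupport {y : ℳ | ∃ l : List ℳ, (∀ a ∈ l, a ∈ T) ∧ l.length ≤ d ∧ y = msum l} F ∧
    Set.Finite {y : ℳ | ∃ l : List ℳ, (∀ a ∈ l, a ∈ T) ∧ l.length ≤ d ∧ y = msum l} :=
  stronglyPolynomial_support_general hI T hTfin hgen d F hF
end
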